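/- Let N be a positive integer, S the real diagonal N×N matrix with entries s_k ∈ {0,1,−1} (S = diag(0,1,…,1,0,−1,…,−1) if N even with s_k = −s_{N−k}, or S = diag(0,1,…,1,−1,…,−1) if N odd with s_k = −s_{N−k} for k ≠ 0), and K̃ the real diagonal matrix with entries k̃_j satisfying k̃_{N−j} = −k̃_j. Then the matrix L_Δ = F^{−1} · (2π/l)·K̃·S · F (where F is the DFT matrix with (F)_{k,n} = exp(−2πi kn/N)) is a real symmetric matrix: L_Δᵀ = L_Δ. -/

import Mathlib

open Matrix

/-- The DFT matrix. -/
noncomputable def dftMatrix (N : ℕ) : Matrix (ZMod N) (ZMod N) ℂ :=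
  fun k n => Complex.exp (-2 * Real.pi * Complex.I * (k.val : ℂ) * (n.val : ℂ) / (N : ℂ))

/-- The inverse DFT matrix. -/
noncomputable def idftMatrix (N : ℕ) : Matrix (ZMod N) (ZMod N) ℂ :=
  fun n k => (1 / (N : ℂ)) *
    Complex.exp (2 * Real.pi * Complex.I * (n.val : ℂ) * (k.val : ℂ) / (N : ℂ))

/-!
Conjugating `diagonal d` by the DFT gives the circulant matrix with entries `N⁻¹ · (𝓕 d) (j - i)`.
It is symmetric when `d` is even, because then so is `𝓕 d`, and it is real when
`d (-k) = conj (d k)`, because `conj ((𝓕 d) m) = 𝓕 (conj ∘ d) (-m)`. The multiplier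
`(2π/l) k̃ s` is a real product of two odd functions, so it is even and real.
-/

open ZMod

namespace ZMod

variable {N : ℕ} [NeZero N]

lemma conj_dft (Φ : ZMod N → ℂ) (k : ZMod N) :
    starRingEnd ℂ (𝓕 Φ k) = 𝓕 (fun j ↦ starRingEnd ℂ (Φ j)) (-k) := by
  simp only [dft_apply, map_sum, smul_eq_mul, map_mul, ← AddChar.map_neg_eq_conj, mul_neg, neg_neg]

end ZMod

section DFTConjugation

variable {N : ℕ} [NeZero N]

lemma dftMatrix_apply (k n : ZMod N) : dftMatrix N k n = stdAddChar (-(k * n)) := by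
  have hcast : ((-(k.val * n.val) : ℤ) : ZMod N) = -(k * n) := by
    push_cast; simp only [natCast_zmod_val]
  rw [← hcast, stdAddChar_coe, dftMatrix]
  congr 1; push_cast; ring

lemma idftMatrix_apply (n k : ZMod N) :
    idftMatrix N n k = (N : ℂ)⁻¹ * stdAddChar (n * k) := by
  have hcast : ((n.val * k.val : ℤ) : ZMod N) = n * k := by
    push_cast; simp only [natCast_zmod_val]
  rw [← hcast, stdAddChar_coe, idftMatrix, one_div]
  congr 2; push_cast; ring

lemma idftMatrix_mul_diagonal_mul_dftMatrix_apply (d : ZMod N → ℂ) (i j : ZMod N) :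
    (idftMatrix N * diagonal d * dftMatrix N) i j = (N : ℂ)⁻¹ * 𝓕 d (j - i) := by
  rw [mul_apply, dft_apply, Finset.mul_sum]
  refine Finset.sum_congr rfl fun k _ ↦ ?_
  rw [mul_diagonal, idftMatrix_apply, dftMatrix_apply, smul_eq_mul]
  have hchar : stdAddChar (i * k) * stdAddChar (-(k * j)) = (stdAddChar (-(k * (j - i))) : ℂ) := by
    rw [← AddChar.map_add_eq_mul]; ring_nf
  linear_combination (↑N)⁻¹ * d k * hchar

lemma transpose_idftMatrix_mul_diagonal_mul_dftMatrix {d : ZMod N → ℂ} (hd : d.Even) :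
    (idftMatrix N * diagonal d * dftMatrix N)ᵀ = idftMatrix N * diagonal d * dftMatrix N := by
  ext i j
  rw [transpose_apply, idftMatrix_mul_diagonal_mul_dftMatrix_apply,
    idftMatrix_mul_diagonal_mul_dftMatrix_apply, ← neg_sub, dft_even_iff.mpr hd]

lemma im_idftMatrix_mul_diagonal_mul_dftMatrix {d : ZMod N → ℂ}
    (hd : ∀ k, d (-k) = starRingEnd ℂ (d k)) (i j : ZMod N) :
    ((idftMatrix N * diagonal d * dftMatrix N) i j).im = 0 := by
  rw [← Complex.conj_eq_iff_im, idftMatrix_mul_diagonal_mul_dftMatrix_apply, map_mul, conj_dft,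
    ← funext hd, dft_comp_neg, map_inv₀, map_natCast]
  simp only [neg_neg]

end DFTConjugation

theorem LDelta_symm_real_general (N : ℕ) [NeZero N] (l : ℝ)
    (s : ZMod N → ℝ)
    (hsodd : ∀ k, s (-k) = -s k)
    (ktil : ZMod N → ℝ) (hktil : ∀ j, ktil (-j) = -ktil j) :
    (idftMatrix N * Matrix.diagonal (fun k => ((2 * Real.pi / l) * ktil k * s k : ℂ)) *
        dftMatrix N)ᵀ
      = idftMatrix N * Matrix.diagonal (fun k => ((2 * Real.pi / l) * ktil k * s k : ℂ)) *
          dftMatrix N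
    ∧ ∀ i j, ((idftMatrix N * Matrix.diagonal (fun k => ((2 * Real.pi / l) * ktil k * s k : ℂ)) *
        dftMatrix N) i j).im = 0 := by
  have heven : ∀ k, (2 * Real.pi / l) * ktil (-k) * s (-k) = (2 * Real.pi / l) * ktil k * s k := by
    intro k; rw [hsodd, hktil]; ring
  refine ⟨transpose_idftMatrix_mul_diagonal_mul_dftMatrix fun k ↦ ?_,
    im_idftMatrix_mul_diagonal_mul_dftMatrix fun k ↦ ?_⟩
  · exact_mod_cast heven k
  · simp only [map_mul, map_div₀, map_ofNat, Complex.conj_ofReal]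
    exact_mod_cast heven k

theorem LDelta_symm_real (N : ℕ) [NeZero N] (l : ℝ) (hl : 0 < l)
    (s : ZMod N → ℝ) (hs : ∀ k, s k = 0 ∨ s k = 1 ∨ s k = -1)
    (hsodd : ∀ k, s (-k) = -s k)
    (ktil : ZMod N → ℝ) (hktil : ∀ j, ktil (-j) = -ktil j) :
    (idftMatrix N * Matrix.diagonal (fun k => ((2 * Real.pi / l) * ktil k * s k : ℂ)) *
        dftMatrix N)ᵀ
      = idftMatrix N * Matrix.diagonal (fun k => ((2 * Real.pi / l) * ktil k * s k : ℂ)) *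
          dftMatrix N
    ∧ ∀ i j, ((idftMatrix N * Matrix.diagonal (fun k => ((2 * Real.pi / l) * ktil k * s k : ℂ)) *
        dftMatrix N) i j).im = 0 :=
  LDelta_symm_real_general N l s hsodd ktil hktil
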